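/- Saturation lemma: Let σ be a relational substitution mapping variables x ∈ X to sets σ(x) ⊆ F(A), let L ⊆ F(A ∪ X) and let R ⊆ F(A) be recognized by a forest algebra homomorphism φ : F(A) → H with R = φ⁻¹(φ(R)). Define the saturated substitution σ̂(x) = { f ∈ F(A) | ∃ f' ∈ σ(x), φ(f') = φ(f) }. Then σ(L) ⊆ R if and only if σ̂(L) ⊆ R. -/

import Mathlib

/-- Forests over an alphabet `A`. -/
inductive Forest (A : Type) : Type
  | nil : Forest A
  | cons : A → Forest A → Forest A → Forest A

namespace Forest

def append {A : Type} : Forest A → Forest A → Forest A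
  | nil, g => g
  | cons a c f, g => cons a c (append f g)

end Forest

/-- Application of a relational substitution `σ : X → 2^{F(A)}` to a forest over
`A ∪ X`: each leaf labeled `x ∈ X` is independently replaced by some forest in
`σ(x)`. -/
def Subst {A X : Type} (σ : X → Set (Forest A)) : Forest (Sum A X) → Set (Forest A)
  | .nil => {Forest.nil}
  | .cons (Sum.inl a) c f =>
      {h | ∃ c' ∈ Subst σ c, ∃ f' ∈ Subst σ f, h = Forest.cons a c' f'}
  | .cons (Sum.inr x) c f =>
      {h | c = Forest.nil ∧ ∃ s ∈ σ x, ∃ f' ∈ Subst σ f, h = Forest.append s f'}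

/-- Application of a relational substitution to a language: `σ(L) = ⋃_{g∈L} σ(g)`. -/
def SubstL {A X : Type} (σ : X → Set (Forest A)) (L : Set (Forest (Sum A X))) :
    Set (Forest A) :=
  ⋃ g ∈ L, Subst σ g

/-- The forest-algebra homomorphism from `F(A)` into an algebra with horizontal
monoid `H`, determined by the action of one-node contexts. -/
def aeval {A H : Type} [Monoid H] (act : A → H → H) : Forest A → H
  | .nil => 1
  | .cons a c f => act a (aeval act c) * aeval act f

/-!
Substitution is compositional and `aeval act` is a homomorphism for `cons` and `append`, so
replacing each substituted piece by a forest with the same value does not change the value of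
the result. Hence every forest of `σ̂(L)` has the value of some forest of `σ(L)`, and `R`, being
a union of classes of `aeval act`, contains one as soon as it contains the other.
-/

@[simp]
lemma aeval_append {A H : Type} [Monoid H] (act : A → H → H) (f g : Forest A) :
    aeval act (f.append g) = aeval act f * aeval act g := by
  induction f with
  | nil => simp [Forest.append, aeval]
  | cons a c f _ ihf => simp [Forest.append, aeval, ihf, mul_assoc]

lemma subst_mono {A X : Type} {σ τ : X → Set (Forest A)} (hστ : ∀ x, σ x ⊆ τ x)
    (g : Forest (Sum A X)) : Subst σ g ⊆ Subst τ g := by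
  induction g with
  | nil => exact subset_rfl
  | cons ax c f ihc ihf =>
    rcases ax with a | x
    · rintro _ ⟨c', hc', f', hf', rfl⟩
      exact ⟨c', ihc hc', f', ihf hf', rfl⟩
    · rintro _ ⟨hc, s, hs, f', hf', rfl⟩
      exact ⟨hc, s, hστ x hs, f', ihf hf', rfl⟩

lemma substL_mono {A X : Type} {σ τ : X → Set (Forest A)} (hστ : ∀ x, σ x ⊆ τ x)
    (L : Set (Forest (Sum A X))) : SubstL σ L ⊆ SubstL τ L :=
  Set.biUnion_mono subset_rfl fun g _ => subst_mono hστ g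

lemma subst_subset_preimage_image_aeval {A X H : Type} [Monoid H] (act : A → H → H)
    {σ τ : X → Set (Forest A)} (hστ : ∀ x, τ x ⊆ aeval act ⁻¹' (aeval act '' σ x))
    (g : Forest (Sum A X)) : Subst τ g ⊆ aeval act ⁻¹' (aeval act '' Subst σ g) := by
  induction g with
  | nil => exact Set.subset_preimage_image _ _
  | cons ax c f ihc ihf =>
    rcases ax with a | x
    · rintro _ ⟨c', hc', f', hf', rfl⟩
      obtain ⟨c'', hc'', hc_eq⟩ := ihc hc'
      obtain ⟨f'', hf'', hf_eq⟩ := ihf hf'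
      exact ⟨.cons a c'' f'', ⟨c'', hc'', f'', hf'', rfl⟩, by simp [aeval, hc_eq, hf_eq]⟩
    · rintro _ ⟨hc, s, hs, f', hf', rfl⟩
      obtain ⟨s', hs', hs_eq⟩ := hστ x hs
      obtain ⟨f'', hf'', hf_eq⟩ := ihf hf'
      exact ⟨s'.append f'', ⟨hc, s', hs', f'', hf'', rfl⟩, by simp [hs_eq, hf_eq]⟩

lemma substL_subset_preimage_image_aeval {A X H : Type} [Monoid H] (act : A → H → H)
    {σ τ : X → Set (Forest A)} (hστ : ∀ x, τ x ⊆ aeval act ⁻¹' (aeval act '' σ x))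
    (L : Set (Forest (Sum A X))) :
    SubstL τ L ⊆ aeval act ⁻¹' (aeval act '' SubstL σ L) :=
  Set.iUnion₂_subset fun g hg =>
    (subst_subset_preimage_image_aeval act hστ g).trans <|
      Set.preimage_mono <| Set.image_mono <| Set.subset_biUnion_of_mem hg

/-- saturation lemma: let `σ` be a relational substitution,
`L ⊆ F(A ∪ X)`, and `R ⊆ F(A)` recognized by the forest algebra homomorphism
`φ = aeval act` (`R = φ⁻¹(φ(R))`). With the saturated substitution
`σ̂(x) = {f | ∃ f' ∈ σ(x), φ(f') = φ(f)}`, we have `σ(L) ⊆ R ↔ σ̂(L) ⊆ R`. -/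
theorem saturation_lemma {A X H : Type} [Monoid H] (act : A → H → H)
    (R : Set (Forest A)) (hR : R = aeval act ⁻¹' (aeval act '' R))
    (L : Set (Forest (Sum A X))) (σ : X → Set (Forest A)) :
    SubstL σ L ⊆ R ↔
      SubstL (fun x => {f | ∃ f' ∈ σ x, aeval act f' = aeval act f}) L ⊆ R := by
  constructor
  · intro hσ
    calc _ ⊆ aeval act ⁻¹' (aeval act '' SubstL σ L) :=
          substL_subset_preimage_image_aeval act (fun _ => subset_rfl) L
      _ ⊆ aeval act ⁻¹' (aeval act '' R) := Set.preimage_mono (Set.image_mono hσ)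
      _ = R := hR.symm
  · exact (substL_mono (fun x => Set.subset_preimage_image (aeval act) (σ x)) L).trans
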